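/- arXiv:1003.0148 — 4 statements merged into one kernel-verified Lean document; each statement's English description precedes it below -/
import Mathlib

section
/- Let (u_k)_{k≥1} be a family of functions u_k : ℝ_{>0} → ℝ_{>0} such that liminf_{x→∞} u_k(x) > 0 for every k ≥ 1, and such that z·u_k(y)/u_k(yz) → 0 as z → ∞ uniformly in y ≥ 1 and k ≥ 1 (i.e. for every ε > 0 there is Z such that z·u_k(y) ≤ ε·u_k(yz) for all z ≥ Z, y ≥ 1, k ≥ 1). Let f : ℝ_{>0} → ℝ_{>0} be locally bounded (bounded on every compact subset of ℝ_{>0}), and suppose there are positive constants c₁, c₂, x₀ such that f(x) ≤ u_k(x) + c₁·k·f(c₂·x/k) for every integer k ≥ 1 and every real x ≥ x₀. Then there exist positive constants A, x₁ and an integer k ≥ 1 such that f(x) ≤ A·u_k(x) for all x ≥ x₁. -/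
/-!
Choose `k` so large that the rescaling factor `r = k / c₂` makes `c₁ k u_k(x / r) ≤ u_k(x) / 2`
(uniform decay of `z u_k(y) / u_k(yz)` with `z = r`). On the window `[X, r X]` the bound
`f ≤ A u_k` holds by local boundedness of `f` and `u_k ≥ ε` for large arguments; the recursion
`f(x) ≤ u_k(x) + c₁ k f(x / r)` then propagates it from each window to the next, since
`u_k + c₁ k A u_k(· / r) ≤ (1 + A / 2) u_k ≤ A u_k` once `A ≥ 2`.
-/

open Set

theorem forall_ge_of_forall_Icc_of_div {P : ℝ → Prop} {r X : ℝ} (hr : 1 < r) (hX : 0 < X)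
    (base : ∀ x ∈ Icc X (r * X), P x) (step : ∀ x, r * X < x → P (x / r) → P x) :
    ∀ x, X ≤ x → P x := by
  have hr₀ : 0 < r := by linarith
  have scale : ∀ n : ℕ, ∀ x ∈ Icc X (r ^ n * X), P x := by
    intro n
    induction n with
    | zero => exact fun x hx => base x ⟨hx.1, by nlinarith [hx.2]⟩
    | succ n ih =>
      intro x hx
      rcases le_or_gt x (r * X) with hsmall | hlarge
      · exact base x ⟨hx.1, hsmall⟩
      refine step x hlarge (ih _ ⟨?_, ?_⟩)
      · rw [le_div_iff₀ hr₀]; linarith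
      · rw [div_le_iff₀ hr₀, ← mul_right_comm, ← pow_succ]; exact hx.2
  intro x hx
  obtain ⟨n, hn⟩ := pow_unbounded_of_one_lt (x / X) hr
  exact scale n x ⟨hx, by rw [div_lt_iff₀ hX] at hn; linarith⟩

theorem exists_le_mul_of_le_add_mul_div {f v : ℝ → ℝ} {a r X ε B : ℝ} (hr : 1 < r)
    (hX : 0 < X) (ha : 0 ≤ a) (hε : 0 < ε)
    (hfB : ∀ x ∈ Icc X (r * X), f x ≤ B) (hvε : ∀ x, X ≤ x → ε ≤ v x)
    (hrec : ∀ x, r * X < x → f x ≤ v x + a * f (x / r))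
    (hdecay : ∀ x, r * X < x → a * v (x / r) ≤ v x / 2) :
    ∃ A, 0 < A ∧ ∀ x, X ≤ x → f x ≤ A * v x := by
  set A := max 2 (B / ε)
  have hA : 2 ≤ A := le_max_left _ _
  refine ⟨A, by linarith, forall_ge_of_forall_Icc_of_div hr hX (fun x hx => ?_) ?_⟩
  · calc f x ≤ B := hfB x hx
      _ = B / ε * ε := by field_simp
      _ ≤ A * ε := by gcongr; exact le_max_right _ _
      _ ≤ A * v x := by gcongr; exact hvε x hx.1
  · intro x hx ih
    have hv : 0 ≤ v x := hε.le.trans (hvε x (by nlinarith))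
    calc f x ≤ v x + a * f (x / r) := hrec x hx
      _ ≤ v x + a * (A * v (x / r)) := by gcongr
      _ = v x + A * (a * v (x / r)) := by ring
      _ ≤ v x + A * (v x / 2) := by gcongr; exact hdecay x hx
      _ ≤ A * v x := by nlinarith

theorem stmt0_general
    (u : ℕ → ℝ → ℝ)
    -- liminf_{x → ∞} u_k(x) > 0 for every k ≥ 1 :
    (hu_liminf : ∀ k : ℕ, 1 ≤ k → ∃ ε : ℝ, 0 < ε ∧ ∃ M : ℝ, ∀ x : ℝ, M ≤ x → ε ≤ u k x)
    -- z·u_k(y)/u_k(yz) → 0 as z → ∞, uniformly in y ≥ 1 and k ≥ 1 :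
    (hu_unif : ∀ ε : ℝ, 0 < ε → ∃ Z : ℝ, ∀ z : ℝ, Z ≤ z → ∀ y : ℝ, 1 ≤ y →
      ∀ k : ℕ, 1 ≤ k → z * u k y ≤ ε * u k (y * z))
    (f : ℝ → ℝ)
    -- f is locally bounded on ℝ_{>0} :
    (hf_locbdd : ∀ s : Set ℝ, IsCompact s → s ⊆ Set.Ioi (0 : ℝ) →
      ∃ M : ℝ, ∀ x ∈ s, f x ≤ M)
    (c₁ c₂ x₀ : ℝ) (hc₁ : 0 < c₁) (hc₂ : 0 < c₂)
    (hmain : ∀ k : ℕ, 1 ≤ k → ∀ x : ℝ, x₀ ≤ x →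
      f x ≤ u k x + c₁ * k * f (c₂ * x / k)) :
    ∃ (A x₁ : ℝ) (k : ℕ), 0 < A ∧ 0 < x₁ ∧ 1 ≤ k ∧
      ∀ x : ℝ, x₁ ≤ x → f x ≤ A * u k x := by
  obtain ⟨Z, hZ⟩ := hu_unif (1 / (2 * c₁ * c₂)) (by positivity)
  obtain ⟨k, hk⟩ := exists_nat_ge (max 1 (c₂ * max Z 2))
  have hk1 : 1 ≤ k := by exact_mod_cast (le_max_left _ _).trans hk
  set r : ℝ := k / c₂ with hr
  have hrZ : max Z 2 ≤ r := by
    rw [hr, le_div_iff₀ hc₂]; linarith [le_max_right 1 (c₂ * max Z 2)]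
  have hr2 : 2 ≤ r := (le_max_right _ _).trans hrZ
  obtain ⟨ε, hε, M, hM⟩ := hu_liminf k hk1
  set X := max x₀ (max 1 M)
  have hXx₀ : x₀ ≤ X := le_max_left _ _
  have hXM : M ≤ X := (le_max_right _ _).trans (le_max_right _ _)
  have hX1 : 1 ≤ X := (le_max_left _ _).trans (le_max_right _ _)
  obtain ⟨B, hB⟩ := hf_locbdd (Icc X (r * X)) isCompact_Icc fun x hx => by
    simp only [mem_Ioi]; linarith [hx.1]
  have hrec (x : ℝ) (hx : r * X < x) : f x ≤ u k x + c₁ * k * f (x / r) := by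
    have := hmain k hk1 x (by nlinarith)
    rwa [show c₂ * x / k = x / r by rw [hr]; field_simp] at this
  have hdecay (x : ℝ) (hx : r * X < x) : c₁ * k * u k (x / r) ≤ u k x / 2 := by
    have hxr : 1 ≤ x / r := by rw [le_div_iff₀ (by positivity)]; nlinarith
    have := hZ r ((le_max_left _ _).trans hrZ) (x / r) hxr k hk1
    rw [div_mul_cancel₀ x (by positivity)] at this
    calc c₁ * k * u k (x / r) = c₁ * c₂ * (r * u k (x / r)) := by rw [hr]; field_simp
      _ ≤ c₁ * c₂ * (1 / (2 * c₁ * c₂) * u k x) := by gcongr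
      _ = u k x / 2 := by field_simp
  obtain ⟨A, hA, hfA⟩ := exists_le_mul_of_le_add_mul_div (by linarith) (by linarith)
    (by positivity) hε hB (fun x hx => hM x (hXM.trans hx)) hrec hdecay
  exact ⟨A, X, k, hA, by linarith, hk1, hfA⟩

/-- Gromov-type iteration lemma (Lemma `lemf` of Cornulier–Tessera).
Functions are defined on all of `ℝ` but all hypotheses and conclusions only concern
the positive reals, where the functions are assumed positive-valued.
"Locally bounded" means bounded on every compact subset of `ℝ_{>0}`. -/
theorem stmt0
    (u : ℕ → ℝ → ℝ)
    (hu_pos : ∀ k : ℕ, 1 ≤ k → ∀ x : ℝ, 0 < x → 0 < u k x)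
    -- liminf_{x → ∞} u_k(x) > 0 for every k ≥ 1 :
    (hu_liminf : ∀ k : ℕ, 1 ≤ k → ∃ ε : ℝ, 0 < ε ∧ ∃ M : ℝ, ∀ x : ℝ, M ≤ x → ε ≤ u k x)
    -- z·u_k(y)/u_k(yz) → 0 as z → ∞, uniformly in y ≥ 1 and k ≥ 1 :
    (hu_unif : ∀ ε : ℝ, 0 < ε → ∃ Z : ℝ, ∀ z : ℝ, Z ≤ z → ∀ y : ℝ, 1 ≤ y →
      ∀ k : ℕ, 1 ≤ k → z * u k y ≤ ε * u k (y * z))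
    (f : ℝ → ℝ)
    (hf_pos : ∀ x : ℝ, 0 < x → 0 < f x)
    -- f is locally bounded on ℝ_{>0} :
    (hf_locbdd : ∀ s : Set ℝ, IsCompact s → s ⊆ Set.Ioi (0 : ℝ) →
      ∃ M : ℝ, ∀ x ∈ s, f x ≤ M)
    (c₁ c₂ x₀ : ℝ) (hc₁ : 0 < c₁) (hc₂ : 0 < c₂) (hx₀ : 0 < x₀)
    (hmain : ∀ k : ℕ, 1 ≤ k → ∀ x : ℝ, x₀ ≤ x →
      f x ≤ u k x + c₁ * k * f (c₂ * x / k)) :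
    ∃ (A x₁ : ℝ) (k : ℕ), 0 < A ∧ 0 < x₁ ∧ 1 ≤ k ∧
      ∀ x : ℝ, x₁ ≤ x → f x ≤ A * u k x :=
  stmt0_general u hu_liminf hu_unif f hf_locbdd c₁ c₂ x₀ hc₁ hc₂ hmain
end

section
/- Let G be a group, S ⊆ G a symmetric generating set, and κ ≥ 1 a fixed integer. Suppose 𝓕 ⊆ F(S) is efficient with constant C, i.e. for every word w ∈ F(S) there exists w' ∈ 𝓕 with π(w') = π(w) and |w'| ≤ C·|w|. Then for every positive integer k and every real n > 0 one has δ(n) ≤ k·δ((C+1)·⌈n/k⌉) + δ_{𝓕[k]}(C·k·⌈n/k⌉); in particular, for n ≥ k, δ(n) ≤ k·δ(2(C+1)·n/k) + δ_{𝓕[k]}(2C·n). -/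
open scoped BigOperators

namespace DehnCT

variable {G : Type*} [Group G] (S : Set G)

/-- The canonical homomorphism `π : F(S) → G` from the free group on `S`. -/
noncomputable def pi : FreeGroup S →* G := FreeGroup.lift Subtype.val

/-- The reduced word length of an element of the free group. -/
noncomputable def len (w : FreeGroup S) : ℕ :=
  letI := Classical.decEq S
  w.norm

/-- `w` is a product (in the free group) of exactly `N` conjugates of elements of
`R ∪ R⁻¹`. -/
def IsProdConj (R : Set (FreeGroup S)) (N : ℕ) (w : FreeGroup S) : Prop :=
  ∃ L : List (FreeGroup S × FreeGroup S), L.length = N ∧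
    (∀ p ∈ L, p.2 ∈ R ∨ p.2⁻¹ ∈ R) ∧
    w = (L.map fun p => p.1 * p.2 * p.1⁻¹).prod

/-- The area of `w` with respect to the set of relators `R`:
the least `N` (possibly `∞`) such that `w` is a product of `N`
conjugates of elements of `R ∪ R⁻¹`. -/
noncomputable def area (R : Set (FreeGroup S)) (w : FreeGroup S) : ℕ∞ :=
  ⨅ (N : ℕ) (_ : IsProdConj S R N w), (N : ℕ∞)

/-- The relators : null-homotopic words of length at most `κ`. -/
def relators (κ : ℕ) : Set (FreeGroup S) :=
  {r | pi S r = 1 ∧ len S r ≤ κ}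

/-- The Dehn function restricted to a set of words `F`: the supremum of the areas of
null-homotopic words in `F` of length at most `x`. -/
noncomputable def dehnF (κ : ℕ) (F : Set (FreeGroup S)) (x : ℝ) : ℕ∞ :=
  ⨆ (w : FreeGroup S) (_ : w ∈ F) (_ : pi S w = 1) (_ : (len S w : ℝ) ≤ x),
    area S (relators S κ) w

/-- The Dehn function of `(G, S, κ)`. -/
noncomputable def dehn (κ : ℕ) (x : ℝ) : ℕ∞ := dehnF S κ Set.univ x

/-- `F[k]` : the set of words obtained as concatenations of at most `k` words of `F`. -/
def concats (F : Set (FreeGroup S)) (k : ℕ) : Set (FreeGroup S) :=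
  {w | ∃ L : List (FreeGroup S), L.length ≤ k ∧ (∀ u ∈ L, u ∈ F) ∧ w = L.prod}

/-- `F` is efficient with constant `C`. -/
def Efficient (F : Set (FreeGroup S)) (C : ℝ) : Prop :=
  ∀ w : FreeGroup S, ∃ w' ∈ F, pi S w' = pi S w ∧ (len S w' : ℝ) ≤ C * (len S w : ℝ)

end DehnCT

open DehnCT

/-! Cut a null-homotopic word `w` of length `≤ k m` into `k` subwords `aᵢ` of length `≤ m` and
replace each by an efficient representative `f aᵢ ∈ 𝓕` of length `≤ C m`. Then
`w = (∏ aᵢ) (∏ f aᵢ)⁻¹ · ∏ f aᵢ`: the first factor is a product of conjugates of the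
null-homotopic words `aᵢ (f aᵢ)⁻¹`, each of length `≤ (C + 1) m`, and the second is a
null-homotopic word of `𝓕[k]` of length `≤ C k m`. Take `m = ⌈n / k⌉`, and use
`⌈n / k⌉ < 2 n / k` when `n ≥ k`. -/

lemma le_mul_natCeil_div {x : ℝ} {k : ℕ} (hk : 0 < k) : x ≤ k * ⌈x / k⌉₊ :=
  (div_le_iff₀' (by exact_mod_cast hk)).mp (Nat.le_ceil _)

namespace DehnCT

variable {G : Type*} {S : Set G}

section Length

open Classical in
lemma len_eq_norm (w : FreeGroup S) : len S w = w.norm := by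
  unfold len; congr

lemma len_one : len S (1 : FreeGroup S) = 0 := by
  simp [len_eq_norm]

lemma len_eq_zero {w : FreeGroup S} : len S w = 0 ↔ w = 1 := by
  simp [len_eq_norm]

lemma len_inv (w : FreeGroup S) : len S w⁻¹ = len S w := by
  simp [len_eq_norm]

lemma len_mul_le (u v : FreeGroup S) : len S (u * v) ≤ len S u + len S v := by
  classical
  simpa [len_eq_norm] using FreeGroup.norm_mul_le u v

lemma len_mk_le (L : List (S × Bool)) : len S (FreeGroup.mk L) ≤ L.length := by
  classical
  simpa [len_eq_norm] using FreeGroup.norm_mk_le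

lemma len_list_prod_le {L : List (FreeGroup S)} {c : ℝ} (h : ∀ u ∈ L, (len S u : ℝ) ≤ c) :
    (len S L.prod : ℝ) ≤ L.length * c := by
  calc (len S L.prod : ℝ) ≤ (L.map fun u => (len S u : ℝ)).sum :=
        L.apply_prod_le_sum_map (fun u => (len S u : ℝ)) (by simp [len_one])
          fun u v => by exact_mod_cast len_mul_le u v
    _ ≤ L.length * c := (List.sum_le_card_nsmul _ c (List.forall_mem_map.mpr h)).trans_eq
        (by rw [List.length_map, nsmul_eq_mul])

lemma exists_list_prod_eq_mk_of_length_le (m : ℕ) :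
    ∀ (k : ℕ) (l : List (S × Bool)), l.length ≤ k * m →
      ∃ A : List (FreeGroup S), A.length = k ∧ (∀ a ∈ A, len S a ≤ m) ∧ A.prod = .mk l
  | 0, l, h => ⟨[], rfl, by simp, by simp_all [FreeGroup.one_eq_mk]⟩
  | k + 1, l, h => by
    obtain ⟨A, hA, hAm, hprod⟩ :=
      exists_list_prod_eq_mk_of_length_le m k (l.drop m) (by simp [Nat.succ_mul] at h ⊢; omega)
    refine ⟨.mk (l.take m) :: A, by simp [hA], ?_, ?_⟩
    · exact List.forall_mem_cons.mpr ⟨(len_mk_le _).trans (by simp), hAm⟩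
    · rw [List.prod_cons, hprod, FreeGroup.mul_mk, List.take_append_drop]

lemma exists_list_prod_eq_of_len_le {k m : ℕ} {w : FreeGroup S} (h : len S w ≤ k * m) :
    ∃ A : List (FreeGroup S), A.length = k ∧ (∀ a ∈ A, len S a ≤ m) ∧ A.prod = w := by
  classical
  obtain ⟨A, hA, hAm, hprod⟩ :=
    exists_list_prod_eq_mk_of_length_le m k w.toWord
      (by simpa [len_eq_norm, FreeGroup.norm] using h)
  exact ⟨A, hA, hAm, hprod.trans FreeGroup.mk_toWord⟩

end Length

section Area

variable {R : Set (FreeGroup S)}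

lemma area_le_of_isProdConj {N : ℕ} {w : FreeGroup S} (h : IsProdConj S R N w) :
    area S R w ≤ N :=
  iInf₂_le N h

lemma isProdConj_one : IsProdConj S R 0 1 := ⟨[], rfl, by simp, by simp⟩

lemma IsProdConj.mul {N₁ N₂ : ℕ} {u v : FreeGroup S} (hu : IsProdConj S R N₁ u)
    (hv : IsProdConj S R N₂ v) : IsProdConj S R (N₁ + N₂) (u * v) := by
  obtain ⟨L₁, rfl, hL₁, rfl⟩ := hu
  obtain ⟨L₂, rfl, hL₂, rfl⟩ := hv
  exact ⟨L₁ ++ L₂, by simp, fun p hp => (List.mem_append.mp hp).elim (hL₁ p) (hL₂ p),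
    by simp⟩

lemma IsProdConj.conj {N : ℕ} {u : FreeGroup S} (hu : IsProdConj S R N u) (g : FreeGroup S) :
    IsProdConj S R N (g * u * g⁻¹) := by
  obtain ⟨L, rfl, hL, rfl⟩ := hu
  refine ⟨L.map fun p => (g * p.1, p.2), by simp, List.forall_mem_map.mpr hL, ?_⟩
  have := map_list_prod (MulAut.conj g) (L.map fun p => p.1 * p.2 * p.1⁻¹)
  simp only [MulAut.conj_apply, List.map_map] at this
  simp only [this, List.map_map]
  congr 1
  exact List.map_congr_left fun p _ => by simp [mul_assoc]

lemma area_one : area S R 1 = 0 :=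
  nonpos_iff_eq_zero.mp (by simpa using area_le_of_isProdConj (isProdConj_one (R := R)))

lemma area_mul_le (u v : FreeGroup S) : area S R (u * v) ≤ area S R u + area S R v :=
  ENat.le_iInf₂_add_iInf₂ fun _ hu _ hv => by
    simpa using area_le_of_isProdConj (hu.mul hv)

lemma area_conj_le (g u : FreeGroup S) : area S R (g * u * g⁻¹) ≤ area S R u :=
  le_iInf₂ fun _ hu => area_le_of_isProdConj (hu.conj g)

lemma area_prod_mul_inv_prod_map_le (f : FreeGroup S → FreeGroup S) :
    ∀ A : List (FreeGroup S),
      area S R (A.prod * (A.map f).prod⁻¹) ≤ (A.map fun a => area S R (a * (f a)⁻¹)).sum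
  | [] => by simp [area_one]
  | a :: A => by
    have : (a :: A).prod * ((a :: A).map f).prod⁻¹
        = a * (A.prod * (A.map f).prod⁻¹) * a⁻¹ * (a * (f a)⁻¹) := by
      simp only [List.map_cons, List.prod_cons, mul_inv_rev]; group
    rw [this, List.map_cons, List.sum_cons, add_comm]
    exact (area_mul_le _ _).trans
      (add_le_add_left ((area_conj_le _ _).trans (area_prod_mul_inv_prod_map_le f A)) _)

end Area

section Dehn

variable [Group G] {κ : ℕ}

lemma Efficient.subsingleton_of_neg {F : Set (FreeGroup S)} {C : ℝ} (hF : Efficient S F C)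
    (hC : C < 0) : Subsingleton (FreeGroup S) := by
  refine subsingleton_of_forall_eq 1 fun w => len_eq_zero.mp ?_
  obtain ⟨w', -, -, hw'⟩ := hF w
  have : (len S w : ℝ) ≤ 0 := by nlinarith [(len S w').cast_nonneg (α := ℝ)]
  exact_mod_cast this.antisymm (len S w).cast_nonneg

lemma area_le_dehnF {F : Set (FreeGroup S)} {x : ℝ} {w : FreeGroup S} (hw : w ∈ F)
    (hπ : pi S w = 1) (hx : (len S w : ℝ) ≤ x) : area S (relators S κ) w ≤ dehnF S κ F x :=
  le_iSup₂_of_le w hw <| le_iSup₂_of_le hπ hx le_rfl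

lemma dehnF_mono {F : Set (FreeGroup S)} {x y : ℝ} (h : x ≤ y) :
    dehnF S κ F x ≤ dehnF S κ F y :=
  iSup₂_le fun _ hw => iSup₂_le fun hπ hx => area_le_dehnF hw hπ (hx.trans h)

lemma dehn_eq_zero_of_subsingleton [Subsingleton (FreeGroup S)] (x : ℝ) : dehn S κ x = 0 :=
  nonpos_iff_eq_zero.mp <| iSup₂_le fun w _ => iSup₂_le fun _ _ => by
    rw [Subsingleton.elim w 1, area_one]

lemma area_le_of_len_le_mul {F : Set (FreeGroup S)} {C : ℝ} (hC : 0 ≤ C)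
    (hF : Efficient S F C) {k m : ℕ} {w : FreeGroup S} (hπ : pi S w = 1)
    (hw : len S w ≤ k * m) :
    area S (relators S κ) w ≤
      k * dehn S κ ((C + 1) * m) + dehnF S κ (concats S F k) (C * k * m) := by
  choose f hfF hfπ hflen using hF
  obtain ⟨A, hAk, hAm, rfl⟩ := exists_list_prod_eq_of_len_le hw
  set B := A.map f
  have hflen_le : ∀ a ∈ A, (len S (f a) : ℝ) ≤ C * m := fun a ha =>
    (hflen a).trans (mul_le_mul_of_nonneg_left (by exact_mod_cast hAm a ha) hC)
  have hBF : B.prod ∈ concats S F k :=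
    ⟨B, by simp [B, hAk], List.forall_mem_map.mpr fun a _ => hfF a, rfl⟩
  have hBπ : pi S B.prod = 1 := by
    rw [map_list_prod, List.map_map, ← hπ, map_list_prod]
    exact congrArg List.prod (List.map_congr_left fun a _ => hfπ a)
  have hBlen : (len S B.prod : ℝ) ≤ C * k * m := by
    have := len_list_prod_le (List.forall_mem_map.mpr hflen_le)
    rwa [List.length_map, hAk, ← mul_assoc, mul_comm (k : ℝ)] at this
  have hpiece : ∀ a ∈ A, area S (relators S κ) (a * (f a)⁻¹) ≤ dehn S κ ((C + 1) * m) := by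
    intro a ha
    refine area_le_dehnF (Set.mem_univ _) (by simp [hfπ]) ?_
    have hmul := len_mul_le a (f a)⁻¹
    rw [len_inv] at hmul
    have hm : (len S a : ℝ) ≤ m := by exact_mod_cast hAm a ha
    calc (len S (a * (f a)⁻¹) : ℝ) ≤ len S a + len S (f a) := by exact_mod_cast hmul
      _ ≤ (C + 1) * m := by linarith [hflen_le a ha]
  calc area S (relators S κ) A.prod
      = area S (relators S κ) (A.prod * B.prod⁻¹ * B.prod) := by rw [inv_mul_cancel_right]
    _ ≤ area S (relators S κ) (A.prod * B.prod⁻¹) + area S (relators S κ) B.prod :=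
      area_mul_le _ _
    _ ≤ k * dehn S κ ((C + 1) * m) + dehnF S κ (concats S F k) (C * k * m) := by
      refine add_le_add ((area_prod_mul_inv_prod_map_le f A).trans ?_)
        (area_le_dehnF hBF hBπ hBlen)
      refine (List.sum_le_card_nsmul _ _ (List.forall_mem_map.mpr hpiece)).trans_eq ?_
      rw [List.length_map, hAk, nsmul_eq_mul]

lemma dehn_le_of_le_mul {F : Set (FreeGroup S)} {C : ℝ} (hC : 0 ≤ C) (hF : Efficient S F C)
    {k m : ℕ} {x : ℝ} (hx : x ≤ k * m) :
    dehn S κ x ≤ k * dehn S κ ((C + 1) * m) + dehnF S κ (concats S F k) (C * k * m) :=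
  iSup₂_le fun _ _ => iSup₂_le fun hπ hw =>
    area_le_of_len_le_mul hC hF hπ (by exact_mod_cast hw.trans hx)

end Dehn

end DehnCT

theorem stmt1_general {G : Type*} [Group G] (S : Set G)
    (κ : ℕ)
    (F : Set (FreeGroup S)) (C : ℝ) (hFeff : Efficient S F C) :
    (∀ k : ℕ, 0 < k → ∀ n : ℝ, 0 < n →
      dehn S κ n ≤
        (k : ℕ∞) * dehn S κ ((C + 1) * (⌈n / (k : ℝ)⌉ : ℤ)) +
          dehnF S κ (concats S F k) (C * k * (⌈n / (k : ℝ)⌉ : ℤ))) ∧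
    (∀ k : ℕ, 0 < k → ∀ n : ℝ, (k : ℝ) ≤ n →
      dehn S κ n ≤
        (k : ℕ∞) * dehn S κ ((C + 1) * (2 * n) / k) +
          dehnF S κ (concats S F k) (2 * C * n)) := by
  rcases lt_or_ge C 0 with hC | hC
  · have := hFeff.subsingleton_of_neg hC
    constructor <;> intros <;> simp [dehn_eq_zero_of_subsingleton]
  refine ⟨fun k hk n hn => ?_, fun k hk n hkn => ?_⟩
  · rw [← natCast_ceil_eq_intCast_ceil (div_pos hn (by exact_mod_cast hk)).le]
    exact dehn_le_of_le_mul hC hFeff (le_mul_natCeil_div hk)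
  · have hk' : (0 : ℝ) < k := by exact_mod_cast hk
    have hm : (⌈n / k⌉₊ : ℝ) ≤ 2 * n / k :=
      (Nat.ceil_lt_two_mul (by linarith [(one_le_div hk').mpr hkn])).le.trans_eq
        (mul_div_assoc ..).symm
    have hdehn : (C + 1) * ⌈n / k⌉₊ ≤ (C + 1) * (2 * n) / k := by
      rw [mul_div_assoc]; exact mul_le_mul_of_nonneg_left hm (by linarith)
    have hdehnF : C * k * ⌈n / k⌉₊ ≤ 2 * C * n :=
      calc C * k * ⌈n / k⌉₊ ≤ C * k * (2 * n / k) := mul_le_mul_of_nonneg_left hm (by positivity)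
        _ = 2 * C * n := by field_simp
    exact (dehn_le_of_le_mul hC hFeff (le_mul_natCeil_div hk)).trans
      (add_le_add (mul_le_mul_right (dehnF_mono hdehn) _) (dehnF_mono hdehnF))

/-- Lemma `astg` of Cornulier–Tessera. -/
theorem stmt1 {G : Type*} [Group G] (S : Set G)
    (hSsym : ∀ s ∈ S, s⁻¹ ∈ S) (hSgen : Subgroup.closure S = ⊤)
    (κ : ℕ) (hκ : 1 ≤ κ)
    (F : Set (FreeGroup S)) (C : ℝ) (hFeff : Efficient S F C) :
    (∀ k : ℕ, 0 < k → ∀ n : ℝ, 0 < n →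
      dehn S κ n ≤
        (k : ℕ∞) * dehn S κ ((C + 1) * (⌈n / (k : ℝ)⌉ : ℤ)) +
          dehnF S κ (concats S F k) (C * k * (⌈n / (k : ℝ)⌉ : ℤ))) ∧
    (∀ k : ℕ, 0 < k → ∀ n : ℝ, (k : ℝ) ≤ n →
      dehn S κ n ≤
        (k : ℕ∞) * dehn S κ ((C + 1) * (2 * n) / k) +
          dehnF S κ (concats S F k) (2 * C * n)) :=
  stmt1_general S κ F C hFeff
end

section
/- Let K₁, …, K_m be normed fields with multiplicative norms, each locally compact and not discrete, let A be a finitely generated abelian group with finite symmetric generating set T, and let λᵢ : A → Kᵢˣ be homomorphisms such that for every i there exists a ∈ A with ‖λᵢ(a)‖ < 1. Let G = (K₁ × ⋯ × K_m) ⋊ A with a ∈ A acting by multiplying the i-th coordinate by λᵢ(a), and S = T ∪ ⋃ᵢ Bᵢ where Bᵢ = {x ∈ Kᵢ : ‖x‖ ≤ 1}. Fix a finite presentation of A over T with relator set R_A ⊆ F(T), and let R ⊆ F(S) consist of: the elements of R_A; all words t s t⁻¹ s'⁻¹ with t ∈ T, s, s' ∈ Bᵢ and λᵢ(t)·s = s';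 all commutators [s, s'] with s ∈ Bᵢ, s' ∈ Bⱼ; and all words s s' s''⁻¹ with s, s', s'' ∈ Bᵢ and s + s' = s''. Then there exists a constant C such that for every n ≥ 1, every i, every v, w ∈ Bᵢ and every word s over T of length ≤ n such that λᵢ(π(s))·v = w, the null-homotopic word s v s⁻¹ w⁻¹ has R-area at most C·n². -/
open scoped BigOperators

namespace SolCT

variable {m : ℕ} (K : Fin m → Type) [∀ i, NormedField (K i)]
variable {A : Type} [CommGroup A] (lam : ∀ i, A →* (K i)ˣ)

/-- The action of `A` on `⊕ᵢ Kᵢ`, multiplying the `i`-th coordinate by `λᵢ(a)`. -/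
noncomputable def piAut : A →* Multiplicative (AddAut (∀ i, K i)) where
  toFun a := Multiplicative.ofAdd (AddEquiv.piCongrRight fun i =>
    Multiplicative.toAdd (DistribMulAction.toAddAut (K i)ˣ (K i) (lam i a)))
  map_one' := by
    apply AddEquiv.ext
    intro x
    funext i
    simp [AddEquiv.piCongrRight, DistribMulAction.toAddAut]
    rfl
  map_mul' a b := by
    apply AddEquiv.ext
    intro x
    funext i
    simp [AddEquiv.piCongrRight, DistribMulAction.toAddAut, mul_smul]
    rfl

/-- The action, as a homomorphism to `MulAut` of the multiplicative version. -/
noncomputable def phi : A →* MulAut (Multiplicative (∀ i, K i)) where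
  toFun a := AddEquiv.toMultiplicative (Multiplicative.toAdd (piAut K lam a))
  map_one' := by ext x; simp
  map_mul' a b := by ext x; simp [map_mul]

/-- The group `G = (K₁ × ⋯ × K_m) ⋊ A`. -/
noncomputable abbrev Grp : Type :=
  SemidirectProduct (Multiplicative (∀ i, K i)) A (phi K lam)

/-- The element of `G` given by `x ∈ Kᵢ` placed in the `i`-th coordinate. -/
noncomputable def bLetter (i : Fin m) (x : K i) : Grp K lam :=
  SemidirectProduct.inl (Multiplicative.ofAdd (Pi.single i x))

/-- The element of `G` given by `t ∈ A`. -/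
noncomputable def tLetter (t : A) : Grp K lam :=
  SemidirectProduct.inr t

/-- The generating set `S = T ∪ ⋃ᵢ Bᵢ`. -/
noncomputable def genS (T : Set A) : Set (Grp K lam) :=
  (tLetter K lam '' T) ∪ ⋃ i, bLetter K lam i '' {x : K i | ‖x‖ ≤ 1}

end SolCT

namespace SolCT

variable {m : ℕ} (K : Fin m → Type) [∀ i, NormedField (K i)]
variable {A : Type} [CommGroup A] (lam : ∀ i, A →* (K i)ˣ)

/-- The letter of `F(S)` corresponding to `t ∈ T`. -/
noncomputable def ftl (T : Set A) (t : A) (ht : t ∈ T) : FreeGroup (genS K lam T) :=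
  FreeGroup.of ⟨tLetter K lam t, Or.inl ⟨t, ht, rfl⟩⟩

/-- The letter of `F(S)` corresponding to `x ∈ Bᵢ`. -/
noncomputable def fbl (T : Set A) (i : Fin m) (x : K i) (hx : ‖x‖ ≤ 1) :
    FreeGroup (genS K lam T) :=
  FreeGroup.of ⟨bLetter K lam i x, Or.inr (Set.mem_iUnion.2 ⟨i, ⟨x, hx, rfl⟩⟩)⟩

/-- The inclusion of the generators `T` of `A` into the generators `S` of `G`. -/
noncomputable def iotaTS (T : Set A) : T → genS K lam T :=
  fun t => ⟨tLetter K lam t.1, Or.inl ⟨t.1, t.2, rfl⟩⟩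

/-- The induced map `F(T) → F(S)` on free groups. -/
noncomputable def mapTS (T : Set A) : FreeGroup T →* FreeGroup (genS K lam T) :=
  FreeGroup.map (iotaTS K lam T)

/-- The set `R` of relators: the relators `R_A` of `A`, the conjugation relators
`t s t⁻¹ s'⁻¹`, the commutation relators `[s, s']`, and the addition relators
`s s' s''⁻¹`. -/
noncomputable def Rel (T : Set A) (RA : Set (FreeGroup T)) :
    Set (FreeGroup (genS K lam T)) :=
  (mapTS K lam T) '' RA ∪
  {w | ∃ (t : A) (ht : t ∈ T) (i : Fin m) (x x' : K i)
      (hx : ‖x‖ ≤ 1) (hx' : ‖x'‖ ≤ 1),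
      ((lam i t : (K i)ˣ) : K i) * x = x' ∧
      w = ftl K lam T t ht * fbl K lam T i x hx * (ftl K lam T t ht)⁻¹ *
        (fbl K lam T i x' hx')⁻¹} ∪
  {w | ∃ (i j : Fin m) (x : K i) (y : K j) (hx : ‖x‖ ≤ 1) (hy : ‖y‖ ≤ 1),
      w = fbl K lam T i x hx * fbl K lam T j y hy * (fbl K lam T i x hx)⁻¹ *
        (fbl K lam T j y hy)⁻¹} ∪
  {w | ∃ (i : Fin m) (x x' x'' : K i)
      (hx : ‖x‖ ≤ 1) (hx' : ‖x'‖ ≤ 1) (hx'' : ‖x''‖ ≤ 1),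
      x + x' = x'' ∧
      w = fbl K lam T i x hx * fbl K lam T i x' hx' * (fbl K lam T i x'' hx'')⁻¹}

end SolCT

/-
Write `σ` as a reduced word of at most `n` letters and reorder it so that the letters `t` with
`‖λᵢ(t)‖ > 1` come first. Since `A` is abelian, a commutator of two letters is a consequence of
`R_A` of area bounded by a constant `D` (there are finitely many letters), and the reordering
costs at most `n²` such commutators. For the reordered word `σ'`, every suffix of `σ'` maps `v`
into the unit ball `Bᵢ`: a suffix of the contracting part only shrinks `v`, and any longer suffix,
once completed by expanding letters, maps `v` to `w`. Hence `σ' v σ'⁻¹ w⁻¹` is a product of `n`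
conjugates of the relators `t s t⁻¹ s'⁻¹`, one per letter.
-/

open SolCT DehnCT
open scoped commutatorElement

section Area

variable {G H : Type*} [Group G] [Group H]

def AreaLE (R : Set G) (N : ℕ) (w : G) : Prop :=
  ∃ L : List (G × G), L.length ≤ N ∧ (∀ p ∈ L, p.2 ∈ R ∨ p.2⁻¹ ∈ R) ∧
    w = (L.map fun p => p.1 * p.2 * p.1⁻¹).prod

namespace AreaLE

variable {R R' C : Set G} {N M D : ℕ} {w w' : G}

theorem one (R : Set G) (N : ℕ) : AreaLE R N 1 :=
  ⟨[], by simp, by simp, by simp⟩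

theorem mono (h : AreaLE R N w) (hNM : N ≤ M) : AreaLE R M w := by
  obtain ⟨L, hL, hmem, rfl⟩ := h
  exact ⟨L, hL.trans hNM, hmem, rfl⟩

theorem mono_set (h : AreaLE R N w) (hRR' : R ⊆ R') : AreaLE R' N w := by
  obtain ⟨L, hL, hmem, rfl⟩ := h
  exact ⟨L, hL, fun p hp => (hmem p hp).imp (@hRR' _) (@hRR' _), rfl⟩

theorem conj_of_mem {r : G} (hr : r ∈ R ∨ r⁻¹ ∈ R) (g : G) : AreaLE R 1 (g * r * g⁻¹) :=
  ⟨[(g, r)], by simp, by simpa using hr, by simp⟩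

theorem of_mem {r : G} (hr : r ∈ R) : AreaLE R 1 r := by
  simpa using conj_of_mem (Or.inl hr) 1

theorem mul (h : AreaLE R N w) (h' : AreaLE R M w') : AreaLE R (N + M) (w * w') := by
  obtain ⟨L, hL, hmem, rfl⟩ := h
  obtain ⟨L', hL', hmem', rfl⟩ := h'
  refine ⟨L ++ L', by simpa using Nat.add_le_add hL hL', ?_, by simp⟩
  simpa only [List.mem_append, or_imp, forall_and] using And.intro hmem hmem'

theorem conj (h : AreaLE R N w) (g : G) : AreaLE R N (g * w * g⁻¹) := by
  obtain ⟨L, hL, hmem, rfl⟩ := h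
  refine ⟨L.map fun p => (g * p.1, p.2), by simpa using hL, ?_, ?_⟩
  · simpa only [List.mem_map, forall_exists_index, and_imp, forall_apply_eq_imp_iff₂] using hmem
  · rw [← MulAut.conj_apply, map_list_prod, List.map_map, List.map_map]
    exact congrArg List.prod (List.map_congr_left fun p _ => by
      simp only [Function.comp_apply, MulAut.conj_apply]
      group)

theorem inv (h : AreaLE R N w) : AreaLE R N w⁻¹ := by
  obtain ⟨L, hL, hmem, rfl⟩ := h
  refine ⟨(L.map fun p => (p.1, p.2⁻¹)).reverse, by simpa using hL, ?_, ?_⟩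
  · simpa only [List.mem_reverse, List.mem_map, forall_exists_index, and_imp,
      forall_apply_eq_imp_iff₂, inv_inv, or_comm] using hmem
  · rw [List.prod_inv_reverse, List.map_reverse, List.map_map, List.map_map]
    exact congrArg _ (congrArg List.reverse (List.map_congr_left fun p _ => by
      simp only [Function.comp_apply]
      group))

theorem commutator (h : AreaLE R N w) (z : G) : AreaLE R (2 * N) ⁅w, z⁆ := by
  convert h.mul (h.inv.conj z) using 1
  · omega
  · group

/-- With `u = σ σ'⁻¹`, `σ b σ⁻¹ c⁻¹ = u (σ' b σ'⁻¹ c⁻¹) u⁻¹ ⁅u, c⁆`. -/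
theorem replace_conjugator {σ σ' b c : G} (hσ : AreaLE R N (σ * σ'⁻¹))
    (h : AreaLE R M (σ' * b * σ'⁻¹ * c⁻¹)) : AreaLE R (M + 2 * N) (σ * b * σ⁻¹ * c⁻¹) := by
  convert (h.conj (σ * σ'⁻¹)).mul (hσ.commutator c) using 1
  group

theorem map (φ : G →* H) (h : AreaLE R N w) : AreaLE (φ '' R) N (φ w) := by
  obtain ⟨L, hL, hmem, rfl⟩ := h
  refine ⟨L.map (Prod.map φ φ), by simpa using hL, ?_, ?_⟩
  · simp only [List.mem_map, Prod.exists, Prod.map, forall_exists_index, and_imp]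
    rintro _ x y hxy rfl
    exact (hmem _ hxy).imp (Set.mem_image_of_mem φ) (fun h => ⟨_, h, map_inv φ y⟩)
  · simp [map_list_prod, Function.comp_def]

theorem trans (hC : ∀ c ∈ C, AreaLE R D c) (h : AreaLE C N w) : AreaLE R (N * D) w := by
  obtain ⟨L, hL, hmem, rfl⟩ := h
  refine AreaLE.mono ?_ (Nat.mul_le_mul_right D hL)
  clear hL
  induction L with
  | nil => simpa using one R 0
  | cons p L ih =>
    have hp : AreaLE R D p.2 :=
      (hmem p List.mem_cons_self).elim (hC _) fun h => by simpa using (hC _ h).inv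
    have := (hp.conj p.1).mul (ih fun q hq => hmem q (List.mem_cons_of_mem p hq))
    simpa [Nat.succ_mul, Nat.add_comm] using this

end AreaLE

theorem exists_areaLE_of_mem_normalClosure {R : Set G} {w : G}
    (h : w ∈ Subgroup.normalClosure R) : ∃ N, AreaLE R N w := by
  induction h using Subgroup.closure_induction with
  | mem x hx =>
    obtain ⟨r, hr, hconj⟩ := Group.mem_conjugatesOfSet_iff.1 hx
    obtain ⟨g, rfl⟩ := isConj_iff.1 hconj
    exact ⟨1, AreaLE.conj_of_mem (Or.inl hr) g⟩
  | one => exact ⟨0, AreaLE.one R 0⟩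
  | mul x y _ _ hx hy =>
    obtain ⟨N, hN⟩ := hx
    obtain ⟨M, hM⟩ := hy
    exact ⟨N + M, hN.mul hM⟩
  | inv x _ hx =>
    obtain ⟨N, hN⟩ := hx
    exact ⟨N, hN.inv⟩

theorem exists_forall_areaLE_of_finite {R X : Set G} (hX : X.Finite)
    (h : X ⊆ Subgroup.normalClosure R) : ∃ D, ∀ x ∈ X, AreaLE R D x := by
  choose! N hN using fun x (hx : x ∈ X) => exists_areaLE_of_mem_normalClosure (h hx)
  obtain ⟨D, hD⟩ := (hX.image N).bddAbove
  exact ⟨D, fun x hx => (hN x hx).mono (hD (Set.mem_image_of_mem N hx))⟩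

end Area

section Reordering

variable {G : Type*} [Group G] {X : Set G}

theorem areaLE_commutator_list_prod {x : G} (hx : x ∈ X) {l : List G} (hl : ∀ g ∈ l, g ∈ X) :
    AreaLE (Set.image2 (fun a b => ⁅a, b⁆) X X) l.length ⁅x, l.prod⁆ := by
  induction l with
  | nil => simpa using AreaLE.one (Set.image2 (fun a b : G => ⁅a, b⁆) X X) 0
  | cons g l ih =>
    have hxg := AreaLE.of_mem
      (Set.mem_image2_of_mem (f := fun a b : G => ⁅a, b⁆) hx (hl g List.mem_cons_self))
    have hxl := (ih fun a ha => hl a (List.mem_cons_of_mem g ha)).conj g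
    convert hxg.mul hxl using 1
    · simp [Nat.add_comm]
    · simp only [List.prod_cons, commutatorElement_def]
      group

theorem areaLE_prod_mul_inv_prod_filter (p : G → Bool) {l : List G} (hl : ∀ g ∈ l, g ∈ X) :
    AreaLE (Set.image2 (fun a b => ⁅a, b⁆) X X) (l.length * l.length)
      (l.prod * (l.filter p ++ l.filter (fun g => !p g)).prod⁻¹) := by
  induction l with
  | nil => simpa using AreaLE.one _ 0
  | cons g l ih =>
    have hl' : ∀ a ∈ l, a ∈ X := fun a ha => hl a (List.mem_cons_of_mem g ha)
    have ih := (ih hl').conj g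
    cases hp : p g
    · have hc := areaLE_commutator_list_prod (hl g List.mem_cons_self) (l := l.filter p)
        fun a ha => hl' a (List.mem_of_mem_filter ha)
      have hle : l.length * l.length + (l.filter p).length ≤ (g :: l).length * (g :: l).length := by
        have := List.length_filter_le p l
        simp only [List.length_cons]
        nlinarith
      convert (ih.mul hc).mono hle using 1
      simp only [List.prod_cons, hp, Bool.false_eq_true, not_false_eq_true,
        List.filter_cons_of_neg, Bool.not_false, List.filter_cons_of_pos, List.prod_append,
        mul_inv_rev, commutatorElement_def]
      group
    · have hle : l.length * l.length ≤ (g :: l).length * (g :: l).length :=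
        Nat.mul_self_le_mul_self (Nat.le_succ _)
      convert ih.mono hle using 1
      simp only [List.prod_cons, hp, List.filter_cons_of_pos, Bool.not_true, Bool.false_eq_true,
        not_false_eq_true, List.filter_cons_of_neg, List.cons_append, List.prod_append, mul_inv_rev]
      group

end Reordering

section NormedDivisionRing

variable {𝕜 : Type*} [NormedDivisionRing 𝕜]

theorem norm_list_prod_le_one {l : List 𝕜} (h : ∀ c ∈ l, ‖c‖ ≤ 1) : ‖l.prod‖ ≤ 1 := by
  rw [List.norm_prod]
  simpa using List.prod_map_le_prod_map₀ norm (fun _ => (1 : ℝ)) (fun c _ => norm_nonneg c) h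

theorem one_le_norm_list_prod {l : List 𝕜} (h : ∀ c ∈ l, 1 ≤ ‖c‖) : 1 ≤ ‖l.prod‖ := by
  rw [List.norm_prod]
  exact List.one_le_prod (by simpa using h)

theorem norm_prod_mul_le_one_of_suffix {P Q s : List 𝕜} {v : 𝕜} (hP : ∀ c ∈ P, 1 ≤ ‖c‖)
    (hQ : ∀ c ∈ Q, ‖c‖ ≤ 1) (hv : ‖v‖ ≤ 1) (hPQ : ‖(P ++ Q).prod * v‖ ≤ 1)
    (hs : s <:+ P ++ Q) : ‖s.prod * v‖ ≤ 1 := by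
  obtain ⟨t, hts⟩ := hs
  rcases List.append_eq_append_iff.1 hts with ⟨P', rfl, rfl⟩ | ⟨Q', rfl, rfl⟩
  · have ht : 1 ≤ ‖t.prod‖ := one_le_norm_list_prod fun c hc => hP c (List.mem_append_left _ hc)
    calc ‖(P' ++ Q).prod * v‖ ≤ ‖t.prod‖ * ‖(P' ++ Q).prod * v‖ :=
          le_mul_of_one_le_left (norm_nonneg _) ht
      _ = ‖(t ++ P' ++ Q).prod * v‖ := by simp only [List.append_assoc, List.prod_append,
          norm_mul, mul_assoc]
      _ ≤ 1 := hPQ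
  · rw [norm_mul]
    exact mul_le_one₀ (norm_list_prod_le_one fun c hc => hQ c (List.mem_append_right _ hc))
      (norm_nonneg v) hv

end NormedDivisionRing

namespace FreeGroup

variable {α : Type*}

variable (α) in
def letters : Set (FreeGroup α) := Set.range of ∪ (Set.range of)⁻¹

theorem finite_letters [Finite α] : (letters α).Finite :=
  (Set.finite_range of).union (Set.finite_range of).inv

theorem exists_list_letters_prod_eq [DecidableEq α] (x : FreeGroup α) :
    ∃ l : List (FreeGroup α), (∀ g ∈ l, g ∈ letters α) ∧ l.length = x.norm ∧ l.prod = x := by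
  refine ⟨x.toWord.map fun a => cond a.2 (of a.1) (of a.1)⁻¹, ?_, by simp [norm], ?_⟩
  · simp only [List.mem_map]
    rintro _ ⟨⟨a, b | b⟩, _, rfl⟩
    · exact Or.inr ⟨a, by simp⟩
    · exact Or.inl ⟨a, rfl⟩
  · rw [← lift_mk, mk_toWord, lift_of_apply]

end FreeGroup

namespace SolCT

variable {m : ℕ} {K : Fin m → Type} [∀ i, NormedField (K i)] {A : Type} [CommGroup A]
  {lam : ∀ i, A →* (K i)ˣ} {T : Set A} {RA : Set (FreeGroup T)} {i : Fin m}

variable (lam T i) in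
noncomputable def wordMultiplier : FreeGroup T →* K i :=
  (Units.coeHom (K i)).comp ((lam i).comp (FreeGroup.lift Subtype.val))

@[simp]
theorem wordMultiplier_of (t : T) : wordMultiplier lam T i (FreeGroup.of t) = lam i t := by
  simp [wordMultiplier]

theorem wordMultiplier_prod_filter_append (p : FreeGroup T → Bool) (l : List (FreeGroup T)) :
    wordMultiplier lam T i (l.filter p ++ l.filter (fun g => !p g)).prod =
      wordMultiplier lam T i l.prod := by
  rw [map_list_prod, map_list_prod, ((List.filter_append_perm p l).map _).prod_eq]

variable (lam T i) in
noncomputable def isExpanding (g : FreeGroup T) : Bool :=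
  1 < ‖wordMultiplier lam T i g‖

theorem norm_wordMultiplier_mul_le_one_of_suffix {l s : List (FreeGroup T)} {v : K i}
    (hv : ‖v‖ ≤ 1) (hlv : ‖wordMultiplier lam T i l.prod * v‖ ≤ 1)
    (hs : s <:+ l.filter (isExpanding lam T i) ++ l.filter (fun g => !isExpanding lam T i g)) :
    ‖wordMultiplier lam T i s.prod * v‖ ≤ 1 := by
  rw [map_list_prod]
  refine norm_prod_mul_le_one_of_suffix (P := (l.filter (isExpanding lam T i)).map _)
    (Q := (l.filter (fun g => !isExpanding lam T i g)).map _) ?_ ?_ hv ?_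
    (by simpa only [List.map_append] using hs.map (wordMultiplier lam T i))
  · simp only [List.mem_map, List.mem_filter, isExpanding, decide_eq_true_eq]
    rintro _ ⟨g, ⟨-, hg⟩, rfl⟩
    exact hg.le
  · simp only [List.mem_map, List.mem_filter, isExpanding, Bool.not_eq_true',
      decide_eq_false_iff_not, not_lt]
    rintro _ ⟨g, ⟨-, hg⟩, rfl⟩
    exact hg
  · rwa [← List.map_append, ← map_list_prod, wordMultiplier_prod_filter_append]

theorem areaLE_conj_letter {g : FreeGroup T} (hg : g ∈ FreeGroup.letters T) {x x' : K i}
    (hx : ‖x‖ ≤ 1) (hx' : ‖x'‖ ≤ 1) (h : wordMultiplier lam T i g * x = x') :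
    AreaLE (Rel K lam T RA) 1
      (mapTS K lam T g * fbl K lam T i x hx * (mapTS K lam T g)⁻¹ * (fbl K lam T i x' hx')⁻¹) := by
  rcases hg with ⟨t, rfl⟩ | ⟨t, ht⟩
  · rw [wordMultiplier_of] at h
    exact AreaLE.of_mem (Or.inl (Or.inl (Or.inr ⟨t.1, t.2, i, x, x', hx, hx', h, rfl⟩)))
  · -- the relator of `t`, with `x` and `x'` exchanged
    obtain rfl : g = (FreeGroup.of t)⁻¹ := by rw [ht, inv_inv]
    subst h
    have hxx : ((lam i t : (K i)ˣ) : K i) * (wordMultiplier lam T i (FreeGroup.of t)⁻¹ * x) = x :=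
      by simp
    have hr : ftl K lam T t.1 t.2 * fbl K lam T i _ hx' * (ftl K lam T t.1 t.2)⁻¹ *
        (fbl K lam T i x hx)⁻¹ ∈ Rel K lam T RA :=
      Or.inl (Or.inl (Or.inr ⟨t.1, t.2, i, _, x, hx', hx, hxx, rfl⟩))
    convert AreaLE.conj_of_mem (Or.inr (by rwa [inv_inv])) (ftl K lam T t.1 t.2)⁻¹ using 1
    simp only [mapTS, map_inv, FreeGroup.map.of, iotaTS, inv_inv, ftl, mul_inv_rev]
    group

theorem areaLE_conj_of_forall_suffix {l : List (FreeGroup T)}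
    (hl : ∀ g ∈ l, g ∈ FreeGroup.letters T) {v : K i} (hv : ‖v‖ ≤ 1)
    (hsuf : ∀ s, s <:+ l → ‖wordMultiplier lam T i s.prod * v‖ ≤ 1) {w : K i} (hw : ‖w‖ ≤ 1)
    (hvw : wordMultiplier lam T i l.prod * v = w) :
    AreaLE (Rel K lam T RA) l.length
      (mapTS K lam T l.prod * fbl K lam T i v hv * (mapTS K lam T l.prod)⁻¹ *
        (fbl K lam T i w hw)⁻¹) := by
  induction l generalizing w with
  | nil =>
    obtain rfl : w = v := by simpa using hvw.symm
    simpa using AreaLE.one (Rel K lam T RA) 0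
  | cons g l ih =>
    have hu := hsuf l (List.suffix_cons g l)
    have hrest := ih (fun a ha => hl a (List.mem_cons_of_mem g ha))
      (fun s hs => hsuf s (hs.trans (List.suffix_cons g l))) hu rfl
    have hstep := areaLE_conj_letter (RA := RA) (hl g List.mem_cons_self) hu hw
      (by rw [← hvw, List.prod_cons, map_mul, mul_assoc])
    convert (hrest.conj (mapTS K lam T g)).mul hstep using 1
    · simp
    · simp only [List.prod_cons, map_mul]
      group

end SolCT

theorem stmt8_general (m : ℕ) (K : Fin m → Type) [∀ i, NormedField (K i)]
    (A : Type) [CommGroup A]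
    (T : Finset A)
    (lam : ∀ i, A →* (K i)ˣ)
    (RA : Set (FreeGroup (T : Set A)))
    (hpres : (FreeGroup.lift Subtype.val : FreeGroup (T : Set A) →* A).ker =
      Subgroup.normalClosure RA) :
    ∃ C : ℝ, ∀ n : ℕ, 1 ≤ n → ∀ (i : Fin m) (v w : K i)
      (hv : ‖v‖ ≤ 1) (hw : ‖w‖ ≤ 1) (σ : FreeGroup (T : Set A)),
      len (T : Set A) σ ≤ n →
      ((lam i ((FreeGroup.lift Subtype.val : FreeGroup (T : Set A) →* A) σ) :
          (K i)ˣ) : K i) * v = w →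
      ∃ L : List (FreeGroup (genS K lam (T : Set A)) ×
          FreeGroup (genS K lam (T : Set A))),
        (L.length : ℝ) ≤ C * (n : ℝ) ^ 2 ∧
        (∀ p ∈ L, p.2 ∈ Rel K lam (T : Set A) RA ∨
          p.2⁻¹ ∈ Rel K lam (T : Set A) RA) ∧
        mapTS K lam (T : Set A) σ * fbl K lam (T : Set A) i v hv *
            (mapTS K lam (T : Set A) σ)⁻¹ * (fbl K lam (T : Set A) i w hw)⁻¹ =
          (L.map fun p => p.1 * p.2 * p.1⁻¹).prod := by
  have hcomm : Set.image2 (fun a b => ⁅a, b⁆) (FreeGroup.letters T) (FreeGroup.letters T) ⊆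
      Subgroup.normalClosure RA := by
    rintro _ ⟨a, -, b, -, rfl⟩
    simp only [← hpres, SetLike.mem_coe, MonoidHom.mem_ker, map_commutatorElement,
      commutatorElement_eq_one_iff_mul_comm]
    exact mul_comm _ _
  obtain ⟨D, hD⟩ := exists_forall_areaLE_of_finite
    (FreeGroup.finite_letters.image2 _ FreeGroup.finite_letters) hcomm
  refine ⟨2 * D + 1, fun n hn i v w hv hw σ hσ hvw => ?_⟩
  classical
  obtain ⟨l, hl, hlen, rfl⟩ := FreeGroup.exists_list_letters_prod_eq σ
  replace hvw : wordMultiplier lam T i l.prod * v = w := hvw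
  set l' := l.filter (isExpanding lam T i) ++ l.filter (fun g => !isExpanding lam T i g)
  have hperm : l'.Perm l := List.filter_append_perm _ l
  have hsort := ((areaLE_prod_mul_inv_prod_filter (isExpanding lam T i) hl).trans hD).map
    (mapTS K lam T)
  rw [map_mul, map_inv] at hsort
  have hconj := areaLE_conj_of_forall_suffix (RA := RA) (fun g hg => hl g (hperm.subset hg)) hv
    (fun s hs => norm_wordMultiplier_mul_le_one_of_suffix hv (hvw ▸ hw) hs) hw
    (by rw [wordMultiplier_prod_filter_append]; exact hvw)
  obtain ⟨L, hL, hmem, heq⟩ :=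
    (hsort.mono_set fun r hr => Or.inl (Or.inl (Or.inl hr))).replace_conjugator hconj
  refine ⟨L, ?_, hmem, heq⟩
  have hln : l.length ≤ n := by
    rw [hlen]
    unfold len at hσ
    convert hσ
  rw [hperm.length_eq] at hL
  exact_mod_cast (show L.length ≤ (2 * D + 1) * n ^ 2 by nlinarith [Nat.mul_le_mul hln hln])

/-- Claim 1 in the proof of Theorem `meta` of Cornulier–Tessera:
the relation `s v s⁻¹ ≡ w` has `R`-area at most `C·n²`. -/
theorem stmt8 (m : ℕ) (K : Fin m → Type) [∀ i, NormedField (K i)]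
    [∀ i, LocallyCompactSpace (K i)] (hnd : ∀ i, ¬ DiscreteTopology (K i))
    (A : Type) [CommGroup A]
    (T : Finset A) (hTsym : ∀ t ∈ T, t⁻¹ ∈ T)
    (hTgen : Subgroup.closure (T : Set A) = ⊤)
    (lam : ∀ i, A →* (K i)ˣ)
    (hcontr : ∀ i : Fin m, ∃ a : A, ‖((lam i a : (K i)ˣ) : K i)‖ < 1)
    (RA : Set (FreeGroup (T : Set A))) (hRAfin : RA.Finite)
    (hpres : (FreeGroup.lift Subtype.val : FreeGroup (T : Set A) →* A).ker =
      Subgroup.normalClosure RA) :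
    ∃ C : ℝ, ∀ n : ℕ, 1 ≤ n → ∀ (i : Fin m) (v w : K i)
      (hv : ‖v‖ ≤ 1) (hw : ‖w‖ ≤ 1) (σ : FreeGroup (T : Set A)),
      len (T : Set A) σ ≤ n →
      ((lam i ((FreeGroup.lift Subtype.val : FreeGroup (T : Set A) →* A) σ) :
          (K i)ˣ) : K i) * v = w →
      ∃ L : List (FreeGroup (genS K lam (T : Set A)) ×
          FreeGroup (genS K lam (T : Set A))),
        (L.length : ℝ) ≤ C * (n : ℝ) ^ 2 ∧
        (∀ p ∈ L, p.2 ∈ Rel K lam (T : Set A) RA ∨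
          p.2⁻¹ ∈ Rel K lam (T : Set A) RA) ∧
        mapTS K lam (T : Set A) σ * fbl K lam (T : Set A) i v hv *
            (mapTS K lam (T : Set A) σ)⁻¹ * (fbl K lam (T : Set A) i w hw)⁻¹ =
          (L.map fun p => p.1 * p.2 * p.1⁻¹).prod :=
  stmt8_general m K A T lam RA hpres
end

section
/- Let n be a nonzero integer, let BS(1,n) be the group presented by generators t, x and the single relator t x t⁻¹ x^{-n}, and let Γ_n = ℤ[1/n]² ⋊ ℤ² where the standard generators of ℤ² act on ℤ[1/n]² by A = n·I₂ and B = [[2,1],[1,1]] respectively. Then the homomorphism BS(1,n) → Γ_n determined by x ↦ ((1,0), (0,0)) and t ↦ ((0,0), (1,0)) is well defined and injective; in particular Γ_n contains a subgroup isomorphic to BS(1,n). -/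
namespace GammaCT

/-- `ℤ[1/n]`, the subring of `ℚ` generated by `1/n`. -/
def Rn (n : ℤ) : Subring ℚ := Subring.closure {1 / (n : ℚ)}

/-- `n`, as an element of `ℤ[1/n]`. -/
def nEl (n : ℤ) : Rn n := ⟨(n : ℚ), intCast_mem _ n⟩

/-- `1/n`, as an element of `ℤ[1/n]`. -/
def nInv (n : ℤ) : Rn n :=
  ⟨(n : ℚ)⁻¹, by
    simpa [Rn, one_div] using Subring.subset_closure (s := {1 / (n : ℚ)}) rfl⟩

instance addAutGroup (A : Type*) [Add A] : Group (AddAut A) where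
  mul g h := AddEquiv.trans h g
  one := AddEquiv.refl _
  inv := AddEquiv.symm
  mul_assoc _ _ _ := rfl
  one_mul _ := rfl
  mul_one _ := rfl
  inv_mul_cancel := AddEquiv.self_trans_symm

@[simp]
theorem addAut_mul_apply {A : Type*} [Add A] (e₁ e₂ : AddAut A) (m : A) :
    (e₁ * e₂) m = e₁ (e₂ m) :=
  rfl

@[simp]
theorem addAut_one_apply {A : Type*} [Add A] (m : A) : (1 : AddAut A) m = m :=
  rfl

/-- The additive automorphism of `ℤ[1/n]²` given by the matrix `A = n·I₂`. -/
def Aaut (n : ℤ) (hn : n ≠ 0) : AddAut (Rn n × Rn n) where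
  toFun x := (nEl n * x.1, nEl n * x.2)
  invFun x := (nInv n * x.1, nInv n * x.2)
  left_inv x := by
    have h : nInv n * nEl n = 1 :=
      Subtype.ext (by
        simpa [nInv, nEl] using inv_mul_cancel₀ (by exact_mod_cast hn : (n : ℚ) ≠ 0))
    simp [← mul_assoc, h]
  right_inv x := by
    have h : nEl n * nInv n = 1 :=
      Subtype.ext (by
        simpa [nInv, nEl] using mul_inv_cancel₀ (by exact_mod_cast hn : (n : ℚ) ≠ 0))
    simp [← mul_assoc, h]
  map_add' x y := by
    simp only [Prod.fst_add, Prod.snd_add, mul_add]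
    rfl

/-- The additive automorphism of `ℤ[1/n]²` given by the matrix `B = [[2,1],[1,1]]`. -/
def Baut (n : ℤ) : AddAut (Rn n × Rn n) where
  toFun x := (2 * x.1 + x.2, x.1 + x.2)
  invFun y := (y.1 - y.2, -y.1 + 2 * y.2)
  left_inv x := by
    refine Prod.ext ?_ ?_ <;> simp <;> ring
  right_inv y := by
    refine Prod.ext ?_ ?_ <;> simp <;> ring
  map_add' x y := by
    refine Prod.ext ?_ ?_ <;> simp <;> ring

theorem Aaut_Baut_comm (n : ℤ) (hn : n ≠ 0) :
    Aaut n hn * Baut n = Baut n * Aaut n hn := by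
  ext x <;> simp [Aaut, Baut, addAut_mul_apply] <;> push_cast <;> ring

/-- The action of `ℤ²` on `ℤ[1/n]²`: the pair `(a, b)` acts by `A^a B^b`. -/
def psi (n : ℤ) (hn : n ≠ 0) :
    Multiplicative (ℤ × ℤ) →* AddAut (Rn n × Rn n) where
  toFun g := Aaut n hn ^ (Multiplicative.toAdd g).1 * Baut n ^ (Multiplicative.toAdd g).2
  map_one' := by simp
  map_mul' g h := by
    have hc : Commute (Baut n) (Aaut n hn) := (Aaut_Baut_comm n hn).symm
    show Aaut n hn ^ ((Multiplicative.toAdd g).1 + (Multiplicative.toAdd h).1) *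
        Baut n ^ ((Multiplicative.toAdd g).2 + (Multiplicative.toAdd h).2) = _
    rw [zpow_add, zpow_add,
      Commute.mul_mul_mul_comm (hc.zpow_zpow _ _)]

/-- The action, in multiplicative form. -/
def phiG (n : ℤ) (hn : n ≠ 0) :
    Multiplicative (ℤ × ℤ) →* MulAut (Multiplicative (Rn n × Rn n)) where
  toFun g := AddEquiv.toMultiplicative (psi n hn g)
  map_one' := by rw [map_one]; rfl
  map_mul' a b := by rw [map_mul]; rfl

/-- The group `Γ_n = ℤ[1/n]² ⋊ ℤ²`. -/
abbrev Gamma (n : ℤ) (hn : n ≠ 0) : Type :=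
  SemidirectProduct (Multiplicative (Rn n × Rn n)) (Multiplicative (ℤ × ℤ)) (phiG n hn)

end GammaCT

open GammaCT

/-- The single relator `t x t⁻¹ x⁻ⁿ` of `BS(1,n)`, on the generators
`true ↦ t`, `false ↦ x`. -/
def BSrel (n : ℤ) : Set (FreeGroup Bool) :=
  {FreeGroup.of true * FreeGroup.of false * (FreeGroup.of true)⁻¹ *
    (FreeGroup.of false) ^ (-n)}

/-- The solvable Baumslag–Solitar group `BS(1,n) = ⟨t, x | t x t⁻¹ = xⁿ⟩`. -/
def BS (n : ℤ) : Type := PresentedGroup (BSrel n)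

instance (n : ℤ) : Group (BS n) := by unfold BS; infer_instance

/-!
Every element of `BS(1,n)` has the form `t⁻ᵃ xᵐ tᵇ`. Let `t ↦ t'`, `x ↦ x'` be a homomorphism
into a group `G`, and suppose some homomorphism `χ` out of `G` kills `x'` and sends `t'` to an
element of infinite order. Applying `χ` to the image of a kernel element `t⁻ᵃ xᵐ tᵇ` forces
`b = a`, so `x'ᵐ = 1`; if `x'` has infinite order too, then `m = 0` and the element is trivial.
In `Γ_n` the relation holds because `A = n·I₂` multiplies `(1,0)` by `n`, `χ` is the projection
onto `ℤ²`, and `ℤ[1/n]²` is torsion-free.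
-/

namespace BS

section NormalForm

variable (n : ℤ)

def t : BS n := PresentedGroup.of true

def x : BS n := PresentedGroup.of false

theorem t_mul_x_mul_t_inv : t n * x n * (t n)⁻¹ = x n ^ n := by
  have h : (PresentedGroup.mk (BSrel n) (FreeGroup.of true * FreeGroup.of false *
      (FreeGroup.of true)⁻¹ * FreeGroup.of false ^ (-n)) : BS n) = 1 :=
    (QuotientGroup.eq_one_iff _).2 (Subgroup.subset_normalClosure rfl)
  rwa [map_mul, map_mul, map_mul, map_inv, map_zpow, zpow_neg, mul_inv_eq_one] at h

theorem t_pow_mul_x_zpow_mul_t_pow_inv (c : ℕ) (m : ℤ) :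
    t n ^ c * x n ^ m * (t n ^ c)⁻¹ = x n ^ (n ^ c * m) := by
  induction c with
  | zero => simp
  | succ c ih =>
    rw [pow_succ', mul_inv_rev, pow_succ', mul_assoc n, zpow_mul, ← t_mul_x_mul_t_inv, conj_zpow,
      ← ih]
    group

def normalForm (a : ℕ) (m b : ℤ) : BS n := (t n ^ a)⁻¹ * x n ^ m * t n ^ b

theorem x_zpow_mul_normalForm (e : ℤ) (a : ℕ) (m b : ℤ) :
    x n ^ e * normalForm n a m b = normalForm n a (n ^ a * e + m) b := by
  rw [normalForm, normalForm, zpow_add, ← t_pow_mul_x_zpow_mul_t_pow_inv]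
  group

theorem t_mul_normalForm_succ (a : ℕ) (m b : ℤ) :
    t n * normalForm n (a + 1) m b = normalForm n a m b := by
  simp only [normalForm, pow_succ, mul_inv_rev]
  group

theorem t_mul_normalForm_zero (m b : ℤ) :
    t n * normalForm n 0 m b = normalForm n 0 (n * m) (b + 1) := by
  have := t_pow_mul_x_zpow_mul_t_pow_inv n 1 m
  simp only [normalForm, pow_zero, inv_one, one_mul, pow_one] at this ⊢
  rw [← this, zpow_add_one]
  group

theorem t_inv_mul_normalForm (a : ℕ) (m b : ℤ) :
    (t n)⁻¹ * normalForm n a m b = normalForm n (a + 1) m b := by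
  simp only [normalForm, pow_succ', mul_inv_rev]
  group

theorem exists_normalForm_eq (g : BS n) : ∃ a m b, normalForm n a m b = g := by
  have hg : g ∈ Subgroup.closure (Set.range PresentedGroup.of) := by
    rw [PresentedGroup.closure_range_of]; trivial
  induction hg using Subgroup.closure_induction_left with
  | one => exact ⟨0, 0, 0, by simp [normalForm]⟩
  | mul_left _ hs _ _ ih =>
    obtain ⟨⟨⟩ | ⟨⟩, rfl⟩ := hs <;> obtain ⟨a, m, b, rfl⟩ := ih
    · refine ⟨a, n ^ a + m, b, ?_⟩
      rw [← mul_one (n ^ a), ← x_zpow_mul_normalForm, zpow_one]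
      rfl
    · cases a with
      | zero => exact ⟨0, n * m, b + 1, (t_mul_normalForm_zero n m b).symm⟩
      | succ a => exact ⟨a, m, b, (t_mul_normalForm_succ n a m b).symm⟩
  | inv_mul_cancel _ hs _ _ ih =>
    obtain ⟨⟨⟩ | ⟨⟩, rfl⟩ := hs <;> obtain ⟨a, m, b, rfl⟩ := ih
    · refine ⟨a, -n ^ a + m, b, ?_⟩
      rw [← mul_neg_one (n ^ a), ← x_zpow_mul_normalForm, zpow_neg_one]
      rfl
    · exact ⟨a + 1, m, b, (t_inv_mul_normalForm n a m b).symm⟩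

end NormalForm

section Lift

variable {n : ℤ} {G : Type*} [Group G]

def lift (tG xG : G) (h : tG * xG * tG⁻¹ = xG ^ n) : BS n →* G :=
  PresentedGroup.toGroup (f := fun b => cond b tG xG) <| by
    rintro r rfl
    simp only [map_mul, map_inv, map_zpow, FreeGroup.lift_apply_of, cond_true, cond_false,
      zpow_neg, h, mul_inv_cancel]

variable {tG xG : G} (h : tG * xG * tG⁻¹ = xG ^ n)

@[simp]
theorem lift_t : lift tG xG h (t n) = tG :=
  PresentedGroup.toGroup.of _

@[simp]
theorem lift_x : lift tG xG h (x n) = xG :=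
  PresentedGroup.toGroup.of _

theorem lift_normalForm (a : ℕ) (m b : ℤ) :
    lift tG xG h (normalForm n a m b) = (tG ^ a)⁻¹ * xG ^ m * tG ^ b := by
  simp [normalForm]

theorem lift_injective {H : Type*} [Group H] (χ : G →* H) (hχx : χ xG = 1)
    (hχt : ¬IsOfFinOrder (χ tG)) (hx : ¬IsOfFinOrder xG) : Function.Injective (lift tG xG h) := by
  refine (injective_iff_map_eq_one _).2 fun g hg => ?_
  obtain ⟨a, m, b, rfl⟩ := exists_normalForm_eq n g
  rw [lift_normalForm] at hg
  have hb : b = a := by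
    have := congrArg χ hg
    simp only [map_mul, map_inv, map_zpow, hχx, one_zpow, mul_one, map_one,
      ← zpow_natCast, inv_mul_eq_one] at this
    exact (injective_zpow_iff_not_isOfFinOrder.2 hχt this).symm
  subst hb
  have hm : m = 0 := by
    rw [zpow_natCast, mul_assoc, inv_mul_eq_one, eq_comm, mul_eq_right, ← zpow_zero xG] at hg
    exact injective_zpow_iff_not_isOfFinOrder.2 hx hg
  rw [normalForm, hm, zpow_zero, mul_one, zpow_natCast, inv_mul_cancel]

end Lift

end BS

namespace GammaCT

variable (n : ℤ) (hn : n ≠ 0)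

noncomputable def xGen : Gamma n hn :=
  SemidirectProduct.inl (Multiplicative.ofAdd ((1 : Rn n), (0 : Rn n)))

noncomputable def tGen : Gamma n hn :=
  SemidirectProduct.inr (Multiplicative.ofAdd ((1 : ℤ), (0 : ℤ)))

theorem xGen_zpow (m : ℤ) :
    xGen n hn ^ m = SemidirectProduct.inl (Multiplicative.ofAdd ((m : Rn n), (0 : Rn n))) := by
  rw [xGen, ← map_zpow, ← ofAdd_zsmul, Prod.smul_mk, zsmul_one, smul_zero]

theorem tGen_mul_xGen_mul_inv : tGen n hn * xGen n hn * (tGen n hn)⁻¹ = xGen n hn ^ n := by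
  rw [tGen, xGen, ← map_inv, ← SemidirectProduct.inl_aut, ← xGen, xGen_zpow]
  congr 1
  show Multiplicative.ofAdd (nEl n * 1, nEl n * 0) = _
  ext <;> simp [nEl]

theorem not_isOfFinOrder_xGen : ¬IsOfFinOrder (xGen n hn) := by
  rw [← injective_zpow_iff_not_isOfFinOrder]
  intro m m' h
  simpa [xGen_zpow] using h

theorem not_isOfFinOrder_rightHom_tGen :
    ¬IsOfFinOrder (SemidirectProduct.rightHom (tGen n hn)) := by
  rw [tGen, SemidirectProduct.rightHom_inr]
  exact not_isOfFinOrder_of_isMulTorsionFree (by simp)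

end GammaCT

/-- the homomorphism `BS(1,n) → Γ_n` with
`x ↦ ((1,0),(0,0))` and `t ↦ ((0,0),(1,0))` is well defined and injective;
in particular `Γ_n` contains a subgroup isomorphic to `BS(1,n)`. -/
theorem stmt11 (n : ℤ) (hn : n ≠ 0) :
    (∃ f : BS n →* Gamma n hn,
      f (PresentedGroup.of false) =
        SemidirectProduct.inl (Multiplicative.ofAdd ((1 : Rn n), (0 : Rn n))) ∧
      f (PresentedGroup.of true) =
        SemidirectProduct.inr (Multiplicative.ofAdd ((1 : ℤ), (0 : ℤ))) ∧
      Function.Injective f) ∧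
    ∃ H : Subgroup (Gamma n hn), Nonempty (BS n ≃* H) := by
  have hrel := tGen_mul_xGen_mul_inv n hn
  have hinj : Function.Injective (BS.lift _ _ hrel) :=
    BS.lift_injective hrel SemidirectProduct.rightHom (SemidirectProduct.rightHom_inl _)
      (not_isOfFinOrder_rightHom_tGen n hn) (not_isOfFinOrder_xGen n hn)
  exact ⟨⟨_, BS.lift_x hrel, BS.lift_t hrel, hinj⟩, _, ⟨MonoidHom.ofInjective hinj⟩⟩
end
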